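/- arXiv:1406.2024 — 7 statements merged into one kernel-verified Lean document; each statement's English description precedes it below -/
import Mathlib

section
/- Let p be a natural number and define the sequence of real polynomials a_k by a_0(x) = x^p and a_{k+1}(x) = a_k''(x) + (d/dx)(x·a_k(x)). Let 0 < α < 1 and let κ, x be real numbers and t ≥ 0. Then the series ∑_{k=0}^∞ a_k(x) · κ^k · t^{k(1−α)} / Γ(k(1−α)+1) converges absolutely; that is, the function k ↦ |a_k(x) · κ^k · t^{k(1−α)} / Γ(k(1−α)+1)| is summable. -/
open Real Polynomial Filter

/-!
The step `f ↦ f'' + (X f)'` does not raise the degree, and on polynomials of degree `≤ n`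
it multiplies the sup norm of the coefficients by at most `(n + 1) (n + 3)`. Hence
`|a_k(x)| ≤ A C^k` with `A, C` depending only on `p` and `x`, and the series is dominated by the
Mittag-Leffler series `∑ z^k / Γ(kβ + 1)` with `β = 1 - α` and `z = C |κ| t^β`. That series
converges by the ratio test: log-convexity of `Γ` gives `Γ(s + β) ≥ s^β Γ(s) / 2`, so consecutive
ratios are `O(s^{-β}) → 0`.
-/

namespace Polynomial

section CommSemiring

variable {R : Type*} [CommSemiring R]

noncomputable def vimStep (f : R[X]) : R[X] := derivative (derivative f) + derivative (X * f)

theorem coeff_vimStep (f : R[X]) (i : ℕ) :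
    (vimStep f).coeff i = f.coeff (i + 2) * ((i + 2) * (i + 1)) + f.coeff i * (i + 1) := by
  simp only [vimStep, coeff_add, coeff_derivative, coeff_X_mul]
  push_cast
  ring

theorem natDegree_vimStep_le {f : R[X]} {n : ℕ} (hf : f.natDegree ≤ n) :
    (vimStep f).natDegree ≤ n := by
  rw [natDegree_le_iff_coeff_eq_zero] at hf ⊢
  intro i hi
  rw [coeff_vimStep, hf i hi, hf (i + 2) (by omega)]
  simp

theorem natDegree_vimStep_iterate_le {f : R[X]} {n : ℕ} (hf : f.natDegree ≤ n) (k : ℕ) :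
    (vimStep^[k] f).natDegree ≤ n := by
  induction k with
  | zero => exact hf
  | succ k ih => rw [Function.iterate_succ_apply']; exact natDegree_vimStep_le ih

end CommSemiring

theorem supNorm_vimStep_le {f : ℝ[X]} {n : ℕ} (hf : f.natDegree ≤ n) :
    (vimStep f).supNorm ≤ (n + 1) * (n + 3) * f.supNorm := by
  obtain ⟨i, hi⟩ := (vimStep f).exists_eq_supNorm
  rw [hi]
  rcases le_or_gt i n with hin | hni
  · have hin' : (i : ℝ) ≤ n := by exact_mod_cast hin
    calc ‖(vimStep f).coeff i‖
        ≤ ‖f.coeff (i + 2)‖ * ((i + 2) * (i + 1)) + ‖f.coeff i‖ * (i + 1) := by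
          rw [coeff_vimStep]
          refine (norm_add_le _ _).trans_eq ?_
          rw [norm_mul, norm_mul, norm_mul, Real.norm_of_nonneg (by positivity : (0 : ℝ) ≤ i + 2),
            Real.norm_of_nonneg (by positivity : (0 : ℝ) ≤ i + 1)]
      _ ≤ f.supNorm * ((i + 2) * (i + 1)) + f.supNorm * (i + 1) := by
          gcongr <;> exact f.le_supNorm _
      _ = (i + 1) * (i + 3) * f.supNorm := by ring
      _ ≤ (n + 1) * (n + 3) * f.supNorm := by gcongr; exact f.supNorm_nonneg
  · rw [coeff_eq_zero_of_natDegree_lt ((natDegree_vimStep_le hf).trans_lt hni), norm_zero]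
    have := f.supNorm_nonneg
    positivity

theorem supNorm_vimStep_iterate_le {f : ℝ[X]} {n : ℕ} (hf : f.natDegree ≤ n) (k : ℕ) :
    (vimStep^[k] f).supNorm ≤ ((n + 1) * (n + 3)) ^ k * f.supNorm := by
  induction k with
  | zero => simp
  | succ k ih =>
    rw [Function.iterate_succ_apply', pow_succ, mul_comm _ ((n + 1) * (n + 3) : ℝ), mul_assoc]
    exact (supNorm_vimStep_le (natDegree_vimStep_iterate_le hf k)).trans (by gcongr)

theorem abs_eval_le_supNorm {f : ℝ[X]} {n : ℕ} (hf : f.natDegree ≤ n) (x : ℝ) :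
    |f.eval x| ≤ (n + 1) * max 1 |x| ^ n * f.supNorm := by
  rw [eval_eq_sum_range' (Nat.lt_succ_of_le hf)]
  calc |∑ i ∈ Finset.range (n + 1), f.coeff i * x ^ i|
      ≤ ∑ i ∈ Finset.range (n + 1), |f.coeff i| * |x| ^ i := by
        simpa only [abs_mul, abs_pow] using
          Finset.abs_sum_le_sum_abs (fun i => f.coeff i * x ^ i) (Finset.range (n + 1))
    _ ≤ ∑ _i ∈ Finset.range (n + 1), f.supNorm * max 1 |x| ^ n := by
        refine Finset.sum_le_sum fun i hi => ?_
        have hin : i ≤ n := Nat.lt_succ_iff.1 (Finset.mem_range.1 hi)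
        have hx : |x| ^ i ≤ max 1 |x| ^ n :=
          (pow_le_pow_left₀ (abs_nonneg x) (le_max_right 1 |x|) i).trans
            (pow_le_pow_right₀ (le_max_left 1 |x|) hin)
        exact mul_le_mul (f.le_supNorm i) hx (by positivity) f.supNorm_nonneg
    _ = (n + 1) * max 1 |x| ^ n * f.supNorm := by
        rw [Finset.sum_const, Finset.card_range, nsmul_eq_mul]; push_cast; ring

end Polynomial

namespace Real

theorem Gamma_add_le_rpow_mul_Gamma {u σ : ℝ} (hu : 0 < u) (hσ0 : 0 < σ) (hσ1 : σ < 1) :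
    Gamma (u + σ) ≤ u ^ σ * Gamma u := by
  have hG : 0 < Gamma u := Gamma_pos_of_pos hu
  calc Gamma (u + σ) = Gamma ((1 - σ) * u + σ * (u + 1)) := by ring_nf
    _ ≤ Gamma u ^ (1 - σ) * Gamma (u + 1) ^ σ :=
        Gamma_mul_add_mul_le_rpow_Gamma_mul_rpow_Gamma hu (by linarith) (by linarith) hσ0
          (by ring)
    _ = u ^ σ * Gamma u := by
        rw [Gamma_add_one hu.ne', mul_rpow hu.le hG.le, mul_left_comm, ← rpow_add hG,
          sub_add_cancel, rpow_one]

theorem rpow_mul_Gamma_le_two_mul_Gamma_add {s β : ℝ} (hβ0 : 0 < β) (hβ1 : β < 1)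
    (hs : β ≤ s) : s ^ β * Gamma s ≤ 2 * Gamma (s + β) := by
  have hs0 : 0 < s := hβ0.trans_le hs
  have hwendel := Gamma_add_le_rpow_mul_Gamma (u := s + β) (σ := 1 - β) (by linarith)
    (by linarith) (by linarith)
  rw [add_add_sub_cancel, Gamma_add_one hs0.ne'] at hwendel
  have hpow : (s + β) ^ (1 - β) ≤ 2 * s ^ (1 - β) :=
    calc (s + β) ^ (1 - β) ≤ (2 * s) ^ (1 - β) := by gcongr; linarith
      _ = 2 ^ (1 - β) * s ^ (1 - β) := mul_rpow zero_le_two hs0.le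
      _ ≤ 2 ^ (1 : ℝ) * s ^ (1 - β) := by gcongr <;> linarith
      _ = 2 * s ^ (1 - β) := by rw [rpow_one]
  have hsplit : s ^ β * s ^ (1 - β) = s := by rw [← rpow_add hs0, add_sub_cancel, rpow_one]
  refine le_of_mul_le_mul_right ?_ (rpow_pos_of_pos hs0 (1 - β))
  calc s ^ β * Gamma s * s ^ (1 - β) = s * Gamma s := by rw [mul_right_comm, hsplit]
    _ ≤ (s + β) ^ (1 - β) * Gamma (s + β) := hwendel
    _ ≤ 2 * s ^ (1 - β) * Gamma (s + β) := by gcongr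
    _ = 2 * Gamma (s + β) * s ^ (1 - β) := by ring

theorem summable_pow_div_Gamma_mul_add_one {β : ℝ} (hβ0 : 0 < β) (hβ1 : β < 1) (z : ℝ) :
    Summable fun k : ℕ => z ^ k / Gamma (k * β + 1) := by
  refine summable_of_ratio_norm_eventually_le (r := 1 / 2) (by norm_num) ?_
  have hgrowth : Tendsto (fun k : ℕ => ((k : ℝ) * β + 1) ^ β) atTop atTop :=
    (tendsto_rpow_atTop hβ0).comp <| tendsto_atTop_add_const_right _ _ <|
      tendsto_natCast_atTop_atTop.atTop_mul_const hβ0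
  filter_upwards [hgrowth.eventually_ge_atTop (4 * |z|)] with k hk
  set s : ℝ := k * β + 1
  have hs : β ≤ s := by simp only [s]; nlinarith [(k.cast_nonneg : (0 : ℝ) ≤ k)]
  have hG : 0 < Gamma s := Gamma_pos_of_pos (hβ0.trans_le hs)
  have hGβ : 0 < Gamma (s + β) := Gamma_pos_of_pos (by linarith)
  have hratio : 2 * |z| * Gamma s ≤ Gamma (s + β) := by
    nlinarith [rpow_mul_Gamma_le_two_mul_Gamma_add hβ0 hβ1 hs]
  rw [Nat.cast_succ, show ((k : ℝ) + 1) * β + 1 = s + β by ring, norm_div, norm_div, norm_pow,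
    norm_pow, Real.norm_eq_abs, Real.norm_of_nonneg hG.le, Real.norm_of_nonneg hGβ.le,
    div_le_iff₀ hGβ]
  calc |z| ^ (k + 1) = 1 / 2 * (|z| ^ k / Gamma s) * (2 * |z| * Gamma s) := by
        field_simp
        ring
    _ ≤ 1 / 2 * (|z| ^ k / Gamma s) * Gamma (s + β) := by gcongr

end Real

/-- Absolute convergence of the VIM power series solution: with `a_0(x) = x^p`,
`a_{k+1} = a_k'' + (x·a_k)'`, `0 < α < 1`, `κ, x` real, `t ≥ 0`, the series
`∑_k a_k(x) κ^k t^{k(1−α)} / Γ(k(1−α)+1)` converges absolutely. -/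
theorem vim_series_abs_convergent (p : ℕ) (a : ℕ → Polynomial ℝ)
    (ha0 : a 0 = Polynomial.X ^ p)
    (harec : ∀ k, a (k + 1) =
      Polynomial.derivative (Polynomial.derivative (a k)) +
        Polynomial.derivative (Polynomial.X * a k))
    (α κ x t : ℝ) (hα0 : 0 < α) (hα1 : α < 1) (ht : 0 ≤ t) :
    Summable (fun k : ℕ =>
      |(a k).eval x * κ ^ k * t ^ ((k : ℝ) * (1 - α)) /
        Real.Gamma ((k : ℝ) * (1 - α) + 1)|) := by
  set β := 1 - α
  have ha : a = fun k => vimStep^[k] (X ^ p) := by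
    funext k
    induction k with
    | zero => exact ha0
    | succ k ih => rw [harec, Function.iterate_succ_apply', ← ih]; rfl
  set C : ℝ := (p + 1) * (p + 3)
  set A : ℝ := (p + 1) * max 1 |x| ^ p
  have hbound (k : ℕ) : |(a k).eval x| ≤ A * C ^ k := by
    have hdeg : (X ^ p : ℝ[X]).natDegree ≤ p := natDegree_X_pow_le p
    have hnorm : (X ^ p : ℝ[X]).supNorm = 1 := by rw [X_pow_eq_monomial, supNorm_monomial, norm_one]
    calc |(a k).eval x| ≤ A * (vimStep^[k] (X ^ p)).supNorm := by
          rw [ha]; exact abs_eval_le_supNorm (natDegree_vimStep_iterate_le hdeg k) x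
      _ ≤ A * C ^ k := by
          gcongr
          simpa [hnorm] using supNorm_vimStep_iterate_le hdeg k
  have hmajorant := (summable_pow_div_Gamma_mul_add_one (sub_pos.2 hα1) (sub_lt_self 1 hα0)
    (C * |κ| * t ^ β)).mul_left A
  refine hmajorant.of_nonneg_of_le (fun k => abs_nonneg _) (fun k => ?_)
  have hG : 0 < Gamma (k * β + 1) := Gamma_pos_of_pos (by positivity)
  have htpow : t ^ ((k : ℝ) * β) = (t ^ β) ^ k := by rw [mul_comm, rpow_mul ht, rpow_natCast]
  rw [abs_div, abs_mul, abs_mul, abs_pow, abs_of_nonneg (rpow_nonneg ht _), abs_of_pos hG, htpow,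
    mul_div_assoc']
  refine div_le_div_of_nonneg_right ?_ hG.le
  calc |(a k).eval x| * |κ| ^ k * (t ^ β) ^ k ≤ A * C ^ k * |κ| ^ k * (t ^ β) ^ k := by
        gcongr
        exact hbound k
    _ = A * (C * |κ| * t ^ β) ^ k := by rw [mul_pow (C * |κ|), mul_pow C]; ring
end

section
/- Let p be a natural number and define the sequence of real polynomials a_k by a_0(x) = x^p and a_{k+1}(x) = a_k''(x) + (d/dx)(x·a_k(x)). Then for every n ≥ 0: (i) every coefficient of a_n is nonnegative; (ii) the degree of a_n equals p; and (iii) the leading coefficient of a_n (the coefficient of x^p) equals (p+1)^n. -/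
open Polynomial

/-- Structure of the polynomials `a_n`: with `a_0(x) = x^p` and
`a_{k+1} = a_k'' + (x·a_k)'`, every coefficient of `a_n` is nonnegative,
the degree of `a_n` is `p`, and the coefficient of `x^p` in `a_n` is `(p+1)^n`. -/
theorem vim_polynomials_structure (p : ℕ) (a : ℕ → Polynomial ℝ)
    (ha0 : a 0 = Polynomial.X ^ p)
    (harec : ∀ k, a (k + 1) =
      Polynomial.derivative (Polynomial.derivative (a k)) +
        Polynomial.derivative (Polynomial.X * a k))
    (n : ℕ) :
    (∀ i, 0 ≤ (a n).coeff i) ∧ (a n).degree = p ∧ (a n).coeff p = ((p : ℝ) + 1) ^ n := by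
  induction n with
  | zero =>
    refine ⟨fun i => ?_, ?_, ?_⟩
    · rw [ha0, Polynomial.coeff_X_pow]
      split <;> norm_num
    · rw [ha0]; exact Polynomial.degree_X_pow p
    · simp [ha0, Polynomial.coeff_X_pow]
  | succ k ih =>
    obtain ⟨hnn, hdeg, hlead⟩ := ih
    have hzero : ∀ i, p < i → (a k).coeff i = 0 := fun i hi =>
      Polynomial.coeff_eq_zero_of_degree_lt (hdeg ▸ by exact_mod_cast hi)
    have hcoeff : ∀ i, (a (k + 1)).coeff i =
        (a k).coeff (i + 2) * ((i + 2) * (i + 1)) + (a k).coeff i * (i + 1) := by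
      intro i
      rw [harec k, Polynomial.coeff_add, Polynomial.coeff_derivative,
        Polynomial.coeff_derivative, Polynomial.coeff_derivative, Polynomial.coeff_X_mul]
      push_cast
      ring
    have hzero' : ∀ i, p < i → (a (k + 1)).coeff i = 0 := by
      intro i hi
      rw [hcoeff i, hzero i hi, hzero (i + 2) (by omega)]
      ring
    have hlead' : (a (k + 1)).coeff p = ((p : ℝ) + 1) ^ (k + 1) := by
      rw [hcoeff p, hzero (p + 2) (by omega), hlead]
      ring
    refine ⟨fun i => ?_, ?_, hlead'⟩
    · rw [hcoeff i]
      have h1 := hnn (i + 2)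
      have h2 := hnn i
      positivity
    · have hle : (a (k + 1)).degree ≤ (p : WithBot ℕ) := by
        rw [Polynomial.degree_le_iff_coeff_zero]
        intro m hm
        exact hzero' m (by exact_mod_cast hm)
      refine Polynomial.degree_eq_of_le_of_coeff_ne_zero hle ?_
      rw [hlead']
      positivity
end

section
/- (Wendel's double inequality.) For all real numbers x > 0 and 0 < s < 1, one has x^{1−s} ≤ Γ(x+1)/Γ(x+s) ≤ (x+s)^{1−s}. -/
open Real

/-- Wendel's double inequality: for `x > 0` and `0 < s < 1`,
`x^{1−s} ≤ Γ(x+1)/Γ(x+s) ≤ (x+s)^{1−s}`. -/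
theorem wendel_double_inequality (x s : ℝ) (hx : 0 < x) (hs0 : 0 < s) (hs1 : s < 1) :
    x ^ (1 - s) ≤ Real.Gamma (x + 1) / Real.Gamma (x + s) ∧
      Real.Gamma (x + 1) / Real.Gamma (x + s) ≤ (x + s) ^ (1 - s) := by
  have hxs : 0 < x + s := by linarith
  have hGx : 0 < Real.Gamma x := Real.Gamma_pos_of_pos hx
  have hGxs : 0 < Real.Gamma (x + s) := Real.Gamma_pos_of_pos hxs
  have hGx1 : Real.Gamma (x + 1) = x * Real.Gamma x := Real.Gamma_add_one hx.ne'
  have hGxs1 : Real.Gamma (x + s + 1) = (x + s) * Real.Gamma (x + s) :=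
    Real.Gamma_add_one hxs.ne'
  have h1s : 0 < 1 - s := by linarith
  constructor
  · have key : Real.Gamma (x + s) ≤ Real.Gamma x ^ (1 - s) * Real.Gamma (x + 1) ^ s := by
      have := Real.Gamma_mul_add_mul_le_rpow_Gamma_mul_rpow_Gamma (s := x) (t := x + 1)
        (a := 1 - s) (b := s) hx (by linarith) h1s hs0 (by ring)
      rwa [show (1 - s) * x + s * (x + 1) = x + s by ring] at this
    rw [le_div_iff₀ hGxs]
    have e1 : x ^ (1 - s) * x ^ s = x := by
      rw [← Real.rpow_add hx]; norm_num
    have e2 : Real.Gamma x ^ (1 - s) * Real.Gamma x ^ s = Real.Gamma x := by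
      rw [← Real.rpow_add hGx]; norm_num
    calc x ^ (1 - s) * Real.Gamma (x + s)
        ≤ x ^ (1 - s) * (Real.Gamma x ^ (1 - s) * Real.Gamma (x + 1) ^ s) :=
          mul_le_mul_of_nonneg_left key (rpow_nonneg hx.le _)
      _ = Real.Gamma (x + 1) := by
          rw [hGx1, mul_rpow hx.le hGx.le,
            show x ^ (1 - s) * (Real.Gamma x ^ (1 - s) * (x ^ s * Real.Gamma x ^ s))
              = (x ^ (1 - s) * x ^ s) * (Real.Gamma x ^ (1 - s) * Real.Gamma x ^ s) by ring,
            e1, e2]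
  · have key : Real.Gamma (x + 1) ≤
        Real.Gamma (x + s) ^ s * Real.Gamma (x + s + 1) ^ (1 - s) := by
      have := Real.Gamma_mul_add_mul_le_rpow_Gamma_mul_rpow_Gamma (s := x + s) (t := x + s + 1)
        (a := s) (b := 1 - s) hxs (by linarith) hs0 h1s (by ring)
      rwa [show s * (x + s) + (1 - s) * (x + s + 1) = x + 1 by ring] at this
    rw [div_le_iff₀ hGxs]
    have e2 : Real.Gamma (x + s) ^ s * Real.Gamma (x + s) ^ (1 - s) = Real.Gamma (x + s) := by
      rw [← Real.rpow_add hGxs]; norm_num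
    calc Real.Gamma (x + 1)
        ≤ Real.Gamma (x + s) ^ s * Real.Gamma (x + s + 1) ^ (1 - s) := key
      _ = (x + s) ^ (1 - s) * Real.Gamma (x + s) := by
          rw [hGxs1, mul_rpow hxs.le hGxs.le,
            show Real.Gamma (x + s) ^ s * ((x + s) ^ (1 - s) * Real.Gamma (x + s) ^ (1 - s))
              = (x + s) ^ (1 - s) * (Real.Gamma (x + s) ^ s * Real.Gamma (x + s) ^ (1 - s)) by
              ring, e2]
end

section
/- Let p be a natural number and define the sequence of real polynomials a_k by a_0(x) = x^p and a_{k+1}(x) = a_k''(x) + (d/dx)(x·a_k(x)). Let 0 < α < 1, let κ, x be real numbers, and define c(x,t) = ∑_{k=0}^∞ a_k(x) · κ^k · t^{k(1−α)} / Γ(k(1−α)+1). Then for every t > 0, the time derivative of c exists and can be computed term by term: (∂/∂t) c(x,t) = ∑_{k=1}^∞ a_k(x) · κ^k · t^{k(1−α)−1} / Γ(k(1−α)). -/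
/-! The operator `q ↦ q'' + (X q)'` does not raise the degree `p` of `a₀` and multiplies the
largest absolute coefficient by at most `(p + 1)²`, so `|a_k(x)| ≤ D E^k`. Since
`A^y ≤ 2 A e^A Γ(y + 1)` for `A ≥ 1`, `y ≥ 0`, taking `A^β = Q + 1` gives
`Q^k / Γ(kβ + 1) = O((Q / (Q + 1))^k)`. With `β = 1 - α > 0` the termwise time derivatives are
therefore dominated, uniformly for `s` near `t`, by a summable sequence, and the series may be
differentiated term by term. The `k = 0` term of the derivative vanishes and `Γ(z + 1) = z Γ(z)`
puts the others in the stated form. -/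

open Real Polynomial

namespace Polynomial

variable {R : Type*}

lemma coeff_derivative_derivative_add_derivative_X_mul [CommSemiring R] (q : R[X]) (i : ℕ) :
    (derivative (derivative q) + derivative (X * q)).coeff i =
      q.coeff (i + 2) * (((i : R) + 2) * ((i : R) + 1)) + q.coeff i * ((i : R) + 1) := by
  rw [coeff_add, coeff_derivative, coeff_derivative, coeff_derivative, coeff_X_mul]
  push_cast
  ring

lemma natDegree_derivative_derivative_add_derivative_X_mul_le [CommSemiring R] {q : R[X]} {p : ℕ}
    (hq : q.natDegree ≤ p) : (derivative (derivative q) + derivative (X * q)).natDegree ≤ p := by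
  refine natDegree_le_iff_coeff_eq_zero.mpr fun i hi => ?_
  rw [coeff_derivative_derivative_add_derivative_X_mul,
    coeff_eq_zero_of_natDegree_lt (by omega : q.natDegree < i + 2),
    coeff_eq_zero_of_natDegree_lt (by omega : q.natDegree < i), zero_mul, zero_mul, add_zero]

lemma exists_abs_coeff_le (q : ℝ[X]) : ∃ B, ∀ i, |q.coeff i| ≤ B := by
  refine ⟨∑ i ∈ q.support, |q.coeff i|, fun i => ?_⟩
  by_cases hi : i ∈ q.support
  · exact Finset.single_le_sum (f := fun i => |q.coeff i|) (fun _ _ => abs_nonneg _) hi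
  · rw [notMem_support_iff.mp hi, abs_zero]
    exact Finset.sum_nonneg fun _ _ => abs_nonneg _

variable {q : ℝ[X]} {p : ℕ} {B : ℝ}

lemma abs_coeff_mul_le_of_natDegree_le (hq : q.natDegree ≤ p) (hB : ∀ i, |q.coeff i| ≤ B)
    {f : ℕ → ℝ} (hf0 : ∀ i, 0 ≤ f i) (hf : Monotone f) (i : ℕ) : |q.coeff i| * f i ≤ B * f p := by
  by_cases hi : i ≤ p
  · exact mul_le_mul (hB i) (hf hi) (hf0 i) ((abs_nonneg _).trans (hB i))
  · rw [coeff_eq_zero_of_natDegree_lt (by omega), abs_zero, zero_mul]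
    exact mul_nonneg ((abs_nonneg _).trans (hB 0)) (hf0 p)

lemma abs_coeff_derivative_derivative_add_derivative_X_mul_le (hq : q.natDegree ≤ p)
    (hB : ∀ i, |q.coeff i| ≤ B) (i : ℕ) :
    |(derivative (derivative q) + derivative (X * q)).coeff i| ≤ ((p : ℝ) + 1) ^ 2 * B := by
  have hB0 : 0 ≤ B := (abs_nonneg _).trans (hB 0)
  have h2 := abs_coeff_mul_le_of_natDegree_le hq hB (f := fun j => (j : ℝ) ^ 2)
    (fun _ => by positivity) (fun _ _ h => pow_le_pow_left₀ (by positivity) (by exact_mod_cast h) 2)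
    (i + 2)
  have h1 := abs_coeff_mul_le_of_natDegree_le hq hB (f := fun j => (j : ℝ) + 1)
    (fun _ => by positivity) (fun _ _ h => add_le_add_left (Nat.cast_le.mpr h) 1) i
  push_cast at h1 h2
  rw [coeff_derivative_derivative_add_derivative_X_mul]
  calc _ ≤ |q.coeff (i + 2)| * (((i : ℝ) + 2) * ((i : ℝ) + 1)) + |q.coeff i| * ((i : ℝ) + 1) := by
        refine (abs_add_le _ _).trans_eq ?_
        simp only [abs_mul, abs_of_nonneg (by positivity : (0 : ℝ) ≤ (i : ℝ) + 2),
          abs_of_nonneg (by positivity : (0 : ℝ) ≤ (i : ℝ) + 1)]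
    _ ≤ |q.coeff (i + 2)| * ((i : ℝ) + 2) ^ 2 + |q.coeff i| * ((i : ℝ) + 1) := by
        gcongr; nlinarith
    _ ≤ B * (p : ℝ) ^ 2 + B * ((p : ℝ) + 1) := add_le_add h2 h1
    _ ≤ ((p : ℝ) + 1) ^ 2 * B := by nlinarith

lemma abs_eval_le_of_abs_coeff_le (hq : q.natDegree ≤ p) (hB : ∀ i, |q.coeff i| ≤ B) (x : ℝ) :
    |q.eval x| ≤ B * ∑ i ∈ Finset.range (p + 1), |x| ^ i := by
  rw [eval_eq_sum_range' (Nat.lt_succ_of_le hq), Finset.mul_sum]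
  refine (Finset.abs_sum_le_sum_abs _ _).trans (Finset.sum_le_sum fun i _ => ?_)
  rw [abs_mul, abs_pow]
  exact mul_le_mul_of_nonneg_right (hB i) (by positivity)

theorem exists_abs_eval_le_geometric {a : ℕ → ℝ[X]}
    (harec : ∀ k, a (k + 1) = derivative (derivative (a k)) + derivative (X * a k)) (x : ℝ) :
    ∃ D E : ℝ, 0 ≤ E ∧ ∀ k, |(a k).eval x| ≤ D * E ^ k := by
  obtain ⟨B, hB⟩ := exists_abs_coeff_le (a 0)
  set p := (a 0).natDegree
  have hcoeff : ∀ k, (a k).natDegree ≤ p ∧ ∀ i, |(a k).coeff i| ≤ (((p : ℝ) + 1) ^ 2) ^ k * B := by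
    intro k
    induction k with
    | zero => exact ⟨le_rfl, by simpa using hB⟩
    | succ k ih =>
      rw [harec, pow_succ', mul_assoc]
      exact ⟨natDegree_derivative_derivative_add_derivative_X_mul_le ih.1,
        abs_coeff_derivative_derivative_add_derivative_X_mul_le ih.1 ih.2⟩
  refine ⟨B * ∑ i ∈ Finset.range (p + 1), |x| ^ i, ((p : ℝ) + 1) ^ 2, by positivity, fun k => ?_⟩
  calc |(a k).eval x| ≤ (((p : ℝ) + 1) ^ 2) ^ k * B * ∑ i ∈ Finset.range (p + 1), |x| ^ i :=
        abs_eval_le_of_abs_coeff_le (hcoeff k).1 (hcoeff k).2 x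
    _ = _ := by ring

end Polynomial

namespace Real

lemma factorial_floor_le_two_mul_Gamma_add_one {y : ℝ} (hy : 0 ≤ y) :
    (⌊y⌋₊.factorial : ℝ) ≤ 2 * Gamma (y + 1) := by
  set n := ⌊y⌋₊
  have hn : (n : ℝ) ≤ y := Nat.floor_le hy
  have hn' : y < n + 1 := Nat.lt_floor_add_one y
  have hΓ : 0 < Gamma (y + 1) := Gamma_pos_of_pos (by linarith)
  -- `(n + 1) n! = Γ(n + 2) ≤ Γ(y + 2) = (y + 1) Γ(y + 1)` and `y + 1 < 2 (n + 1)`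
  have hmono : Gamma ((n : ℝ) + 1 + 1) ≤ Gamma (y + 1 + 1) :=
    Gamma_strictMonoOn_Ici.monotoneOn (Set.mem_Ici.mpr (by linarith [n.cast_nonneg (α := ℝ)]))
      (Set.mem_Ici.mpr (by linarith)) (by linarith)
  rw [Gamma_add_one (s := (n : ℝ) + 1) (by positivity), Gamma_nat_eq_factorial,
    Gamma_add_one (s := y + 1) (by positivity)] at hmono
  nlinarith

lemma rpow_le_two_mul_exp_mul_Gamma_add_one {A y : ℝ} (hA : 1 ≤ A) (hy : 0 ≤ y) :
    A ^ y ≤ 2 * A * exp A * Gamma (y + 1) := by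
  set n := ⌊y⌋₊
  have hy_le : A ^ y ≤ A * A ^ n := by
    rw [← pow_succ', ← rpow_natCast]
    exact rpow_le_rpow_of_exponent_le hA (by push_cast; exact (Nat.lt_floor_add_one y).le)
  have hpow : A ^ n ≤ exp A * n.factorial := by
    have := pow_div_factorial_le_exp A (by linarith) n
    rwa [div_le_iff₀ (by positivity)] at this
  calc A ^ y ≤ A * (exp A * (2 * Gamma (y + 1))) := by
        refine hy_le.trans (mul_le_mul_of_nonneg_left (hpow.trans ?_) (by linarith))
        exact mul_le_mul_of_nonneg_left (factorial_floor_le_two_mul_Gamma_add_one hy) (exp_pos A).le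
    _ = 2 * A * exp A * Gamma (y + 1) := by ring

lemma summable_succ_mul_pow_div_Gamma {β Q : ℝ} (hβ : 0 < β) (hQ : 0 ≤ Q) :
    Summable fun k : ℕ => ((k : ℝ) + 1) * Q ^ k / Gamma (k * β + 1) := by
  set A := (Q + 1) ^ β⁻¹
  have hA : 1 ≤ A := one_le_rpow (by linarith) (by positivity)
  have hAβ : A ^ β = Q + 1 := by
    rw [← rpow_mul (by linarith), inv_mul_cancel₀ hβ.ne', rpow_one]
  have hAk : ∀ k : ℕ, A ^ ((k : ℝ) * β) = (Q + 1) ^ k := fun k => by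
    rw [mul_comm, rpow_mul_natCast (by positivity), hAβ]
  set r := Q / (Q + 1)
  have hr : ‖r‖ < 1 := by
    rw [norm_of_nonneg (by positivity)]
    exact (div_lt_one (by linarith)).mpr (by linarith)
  refine Summable.of_nonneg_of_le (fun k => by positivity) (fun k => ?_)
    ((summable_choose_mul_geometric_of_norm_lt_one 1 hr).mul_left (2 * A * exp A))
  have hΓ := Gamma_pos_of_pos (show 0 < (k : ℝ) * β + 1 by positivity)
  have hK := rpow_le_two_mul_exp_mul_Gamma_add_one hA (by positivity : 0 ≤ (k : ℝ) * β)
  rw [hAk] at hK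
  rw [div_le_iff₀ hΓ, Nat.choose_one_right, div_pow]
  push_cast
  calc ((k : ℝ) + 1) * Q ^ k = ((k : ℝ) + 1) * (Q ^ k / (Q + 1) ^ k) * (Q + 1) ^ k := by
        field_simp
    _ ≤ ((k : ℝ) + 1) * (Q ^ k / (Q + 1) ^ k) * (2 * A * exp A * Gamma (k * β + 1)) := by
        gcongr
    _ = _ := by ring

end Real

section GeometricCoefficients

variable {c C E β : ℝ} {k : ℕ}

lemma abs_mul_rpow_le (hc : |c| ≤ C * E ^ k) (hβ : 0 ≤ β) {y R : ℝ} (hy : 0 ≤ y)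
    (hyR : y ≤ R) : |c| * y ^ ((k : ℝ) * β) ≤ C * (E * R ^ β) ^ k := by
  rw [mul_pow, ← rpow_mul_natCast (hy.trans hyR), mul_comm β, ← mul_assoc]
  exact mul_le_mul hc (rpow_le_rpow hy hyR (by positivity)) (by positivity)
    ((abs_nonneg _).trans hc)

lemma norm_mul_rpow_div_Gamma_le (hc : |c| ≤ C * E ^ k) (hβ : 0 ≤ β) {y : ℝ}
    (hy : 0 ≤ y) :
    ‖c * y ^ ((k : ℝ) * β) / Gamma ((k : ℝ) * β + 1)‖ ≤
      C * (((k : ℝ) + 1) * (E * y ^ β) ^ k / Gamma ((k : ℝ) * β + 1)) := by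
  have hΓ := Gamma_pos_of_pos (show 0 < (k : ℝ) * β + 1 by positivity)
  have hCE : 0 ≤ C * (E * y ^ β) ^ k := (abs_mul_rpow_le hc hβ hy le_rfl).trans' (by positivity)
  rw [norm_div, norm_mul, Real.norm_eq_abs, norm_of_nonneg hΓ.le, norm_of_nonneg (by positivity)]
  calc |c| * y ^ ((k : ℝ) * β) / Gamma ((k : ℝ) * β + 1)
      ≤ C * (E * y ^ β) ^ k / Gamma ((k : ℝ) * β + 1) := by
        gcongr ?_ / _
        exact abs_mul_rpow_le hc hβ hy le_rfl
    _ ≤ ((k : ℝ) + 1) * (C * (E * y ^ β) ^ k) / Gamma ((k : ℝ) * β + 1) := by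
        gcongr ?_ / _
        exact le_mul_of_one_le_left hCE (le_add_of_nonneg_left k.cast_nonneg)
    _ = _ := by ring

lemma norm_mul_deriv_rpow_div_Gamma_le (hc : |c| ≤ C * E ^ k) (hβ : 0 ≤ β)
    {y R : ℝ} (hy : 0 < y) (hyR : y ≤ R) :
    ‖c * ((k * β) * y ^ ((k : ℝ) * β - 1)) / Gamma ((k : ℝ) * β + 1)‖ ≤
      β / y * (C * (((k : ℝ) + 1) * (E * R ^ β) ^ k / Gamma ((k : ℝ) * β + 1))) := by
  have hΓ := Gamma_pos_of_pos (show 0 < (k : ℝ) * β + 1 by positivity)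
  rw [norm_div, norm_mul, norm_mul, Real.norm_eq_abs, norm_of_nonneg hΓ.le,
    norm_of_nonneg (by positivity), norm_of_nonneg (by positivity), rpow_sub_one hy.ne']
  calc |c| * ((k : ℝ) * β * (y ^ ((k : ℝ) * β) / y)) / Gamma ((k : ℝ) * β + 1)
      = (k : ℝ) * β / y * (|c| * y ^ ((k : ℝ) * β)) / Gamma ((k : ℝ) * β + 1) := by ring
    _ ≤ ((k : ℝ) + 1) * β / y * (C * (E * R ^ β) ^ k) / Gamma ((k : ℝ) * β + 1) := by
        gcongr ?_ * ?_ / _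
        · gcongr; linarith
        · exact abs_mul_rpow_le hc hβ hy.le hyR
    _ = _ := by ring

end GeometricCoefficients

theorem hasDerivAt_tsum_mul_rpow_div_Gamma {c : ℕ → ℝ} {C E β t : ℝ} (hβ : 0 < β) (hE : 0 ≤ E)
    (hc : ∀ k, |c k| ≤ C * E ^ k) (ht : 0 < t) :
    HasDerivAt (fun s => ∑' k : ℕ, c k * s ^ ((k : ℝ) * β) / Gamma ((k : ℝ) * β + 1))
      (∑' k : ℕ, c k * ((k * β) * t ^ ((k : ℝ) * β - 1)) / Gamma ((k : ℝ) * β + 1)) t := by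
  have hC : 0 ≤ C := by simpa using (abs_nonneg _).trans (hc 0)
  have hts : t ∈ Set.Ioo (t / 2) (t + 1) := ⟨by linarith, by linarith⟩
  refine hasDerivAt_tsum_of_isPreconnected
    (g := fun (k : ℕ) (s : ℝ) => c k * s ^ ((k : ℝ) * β) / Gamma ((k : ℝ) * β + 1))
    (g' := fun (k : ℕ) (s : ℝ) => c k * ((k * β) * s ^ ((k : ℝ) * β - 1)) / Gamma ((k : ℝ) * β + 1))
    (u := fun k : ℕ => 2 * β / t *
      (C * (((k : ℝ) + 1) * (E * (t + 1) ^ β) ^ k / Gamma ((k : ℝ) * β + 1))))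
    (((summable_succ_mul_pow_div_Gamma hβ (by positivity)).mul_left C).mul_left _) isOpen_Ioo
    isPreconnected_Ioo (fun k y hy => ?_) (fun k y hy => ?_) hts ?_ hts
  · have hy0 : y ≠ 0 := by linarith [hy.1]
    exact ((hasDerivAt_rpow_const (Or.inl hy0)).const_mul (c k)).div_const _
  · have hy0 : 0 < y := by linarith [hy.1]
    refine (norm_mul_deriv_rpow_div_Gamma_le (hc k) hβ.le hy0 hy.2.le).trans ?_
    refine mul_le_mul_of_nonneg_right ?_ (mul_nonneg hC (div_nonneg (by positivity)
      (Gamma_pos_of_pos (by positivity)).le))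
    rw [div_le_div_iff₀ hy0 ht]
    nlinarith [hy.1]
  · refine ((summable_succ_mul_pow_div_Gamma hβ (by positivity : 0 ≤ E * t ^ β)).mul_left C)
      |>.of_norm_bounded fun k => ?_
    exact norm_mul_rpow_div_Gamma_le (hc k) hβ.le ht.le

lemma tsum_mul_deriv_rpow_div_Gamma_eq {β : ℝ} (hβ : 0 < β) (c : ℕ → ℝ) (t : ℝ) :
    ∑' k : ℕ, c k * ((k * β) * t ^ ((k : ℝ) * β - 1)) / Gamma ((k : ℝ) * β + 1) =
      ∑' k : ℕ, c (k + 1) * t ^ (((k : ℝ) + 1) * β - 1) / Gamma (((k : ℝ) + 1) * β) := by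
  rw [← Nat.succ_injective.tsum_eq]
  · refine tsum_congr fun k => ?_
    have hkβ : 0 < ((k : ℝ) + 1) * β := by positivity
    push_cast
    rw [Gamma_add_one hkβ.ne']
    field_simp [(Gamma_pos_of_pos hkβ).ne']
  · rintro (_ | k) hk
    · simp at hk
    · exact ⟨k, rfl⟩

theorem vim_series_time_derivative_general (a : ℕ → Polynomial ℝ)
    (harec : ∀ k, a (k + 1) =
      Polynomial.derivative (Polynomial.derivative (a k)) +
        Polynomial.derivative (Polynomial.X * a k))
    (α κ x : ℝ) (hα1 : α < 1) (t : ℝ) (ht : 0 < t) :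
    HasDerivAt
      (fun s : ℝ => ∑' k : ℕ,
        (a k).eval x * κ ^ k * s ^ ((k : ℝ) * (1 - α)) /
          Real.Gamma ((k : ℝ) * (1 - α) + 1))
      (∑' k : ℕ,
        (a (k + 1)).eval x * κ ^ (k + 1) * t ^ (((k : ℝ) + 1) * (1 - α) - 1) /
          Real.Gamma (((k : ℝ) + 1) * (1 - α))) t := by
  have hβ : 0 < 1 - α := sub_pos.mpr hα1
  obtain ⟨D, E, hE, hD⟩ := exists_abs_eval_le_geometric harec x
  have hc : ∀ k, |(a k).eval x * κ ^ k| ≤ D * (E * |κ|) ^ k := fun k => by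
    rw [abs_mul, abs_pow, mul_pow, ← mul_assoc]
    exact mul_le_mul_of_nonneg_right (hD k) (by positivity)
  rw [← tsum_mul_deriv_rpow_div_Gamma_eq hβ (fun k => (a k).eval x * κ ^ k)]
  exact hasDerivAt_tsum_mul_rpow_div_Gamma hβ (by positivity) hc ht

/-- Term-by-term time differentiation of the VIM series solution: with
`a_0(x) = x^p`, `a_{k+1} = a_k'' + (x·a_k)'`, `0 < α < 1`, for every `t > 0` the
function `t ↦ ∑_k a_k(x) κ^k t^{k(1−α)} / Γ(k(1−α)+1)` has derivative
`∑_{k=1}^∞ a_k(x) κ^k t^{k(1−α)−1} / Γ(k(1−α))` at `t`. -/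
theorem vim_series_time_derivative (p : ℕ) (a : ℕ → Polynomial ℝ)
    (ha0 : a 0 = Polynomial.X ^ p)
    (harec : ∀ k, a (k + 1) =
      Polynomial.derivative (Polynomial.derivative (a k)) +
        Polynomial.derivative (Polynomial.X * a k))
    (α κ x : ℝ) (hα0 : 0 < α) (hα1 : α < 1) (t : ℝ) (ht : 0 < t) :
    HasDerivAt
      (fun s : ℝ => ∑' k : ℕ,
        (a k).eval x * κ ^ k * s ^ ((k : ℝ) * (1 - α)) /
          Real.Gamma ((k : ℝ) * (1 - α) + 1))
      (∑' k : ℕ,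
        (a (k + 1)).eval x * κ ^ (k + 1) * t ^ (((k : ℝ) + 1) * (1 - α) - 1) /
          Real.Gamma (((k : ℝ) + 1) * (1 - α))) t :=
  vim_series_time_derivative_general a harec α κ x hα1 t ht
end

section
/- Define the sequence of real polynomials a_k by a_0(x) = x and a_{k+1}(x) = a_k''(x) + (d/dx)(x·a_k(x)). Let 0 < α < 1 and let κ, x be real numbers and t ≥ 0. Then the series solution of the Hilfer advection-diffusion problem with initial condition c(x,0) = x has the Mittag-Leffler closed form: ∑_{k=0}^∞ a_k(x) · κ^k · t^{k(1−α)} / Γ(k(1−α)+1) = x · ∑_{k=0}^∞ (2κ t^{1−α})^k / Γ(k(1−α)+1), i.e. it equals x · E_{1−α}(2κ t^{1−α}). -/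
open Real Polynomial

/-- Mittag-Leffler closed form of the series solution for initial condition
`c(x,0) = x`: with `a_0(x) = x`, `a_{k+1} = a_k'' + (x·a_k)'`, `0 < α < 1`, `t ≥ 0`,
`∑_k a_k(x) κ^k t^{k(1−α)} / Γ(k(1−α)+1) = x · ∑_k (2κ t^{1−α})^k / Γ(k(1−α)+1)`,
i.e. the solution equals `x · E_{1−α}(2κ t^{1−α})`. -/
theorem vim_solution_p_one_mittag_leffler (a : ℕ → Polynomial ℝ)
    (ha0 : a 0 = Polynomial.X)
    (harec : ∀ k, a (k + 1) =
      Polynomial.derivative (Polynomial.derivative (a k)) +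
        Polynomial.derivative (Polynomial.X * a k))
    (α κ x t : ℝ) (hα0 : 0 < α) (hα1 : α < 1) (ht : 0 ≤ t) :
    ∑' k : ℕ, (a k).eval x * κ ^ k * t ^ ((k : ℝ) * (1 - α)) /
        Real.Gamma ((k : ℝ) * (1 - α) + 1) =
      x * ∑' k : ℕ, (2 * κ * t ^ (1 - α)) ^ k / Real.Gamma ((k : ℝ) * (1 - α) + 1) := by
  have key : ∀ k, a k = Polynomial.C ((2 : ℝ) ^ k) * Polynomial.X := by
    intro k
    induction k with
    | zero => simp [ha0]
    | succ n ih =>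
      rw [harec n, ih]
      simp only [derivative_mul, derivative_C, derivative_X, zero_mul, mul_one, zero_add,
        map_zero, add_zero, Polynomial.derivative_C_mul]
      rw [pow_succ]
      ring_nf
      rw [map_mul]
      ring_nf
      rw [show (Polynomial.C (2:ℝ) : ℝ[X]) = 2 from map_ofNat _ 2]
  rw [← tsum_mul_left]
  congr 1
  funext k
  rw [key k]
  have ht' : t ^ ((k : ℝ) * (1 - α)) = (t ^ (1 - α)) ^ k := by
    rw [mul_comm, Real.rpow_mul ht, Real.rpow_natCast]
  simp only [Polynomial.eval_mul, Polynomial.eval_C, Polynomial.eval_X, ht', mul_pow]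
  ring
end

section
/- Define the sequence of real polynomials a_k by a_0(x) = x² and a_{k+1}(x) = a_k''(x) + (d/dx)(x·a_k(x)). Let 0 < α < 1 and let κ, x be real numbers and t ≥ 0. Then the series solution of the Hilfer advection-diffusion problem with initial condition c(x,0) = x² has the closed form ∑_{k=0}^∞ a_k(x) · κ^k · t^{k(1−α)} / Γ(k(1−α)+1) = x² · E_{1−α}(3κ t^{1−α}) + E_{1−α}(3κ t^{1−α}) − E_{1−α}(κ t^{1−α}), where E_μ(z) = ∑_{k=0}^∞ z^k / Γ(μk + 1). -/
/-!
The recursion maps `X²` to `3X² + 2` and constants to themselves, so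
`a_k = 3ᵏ X² + (3ᵏ - 1)`. Hence the `k`-th term of the series is
`(x² + 1) (3κ t^{1-α})ᵏ / Γ(k(1-α)+1) - (κ t^{1-α})ᵏ / Γ(k(1-α)+1)`, and the series splits
into Mittag-Leffler series, which converge because `Γ(kμ + 1) ≥ ⌊k/N⌋!` once `Nμ ≥ 1`.
-/

open Real Polynomial Filter Topology Nat

theorem Real.factorial_le_Gamma_add_one {n : ℕ} {y : ℝ} (hn : 1 ≤ n) (hny : (n : ℝ) ≤ y) :
    (n ! : ℝ) ≤ Gamma (y + 1) := by
  have hn' : (1 : ℝ) ≤ n := by exact_mod_cast hn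
  rw [← Gamma_nat_eq_factorial]
  exact Gamma_strictMonoOn_Ici.monotoneOn (by simp only [Set.mem_Ici]; linarith)
    (by simp only [Set.mem_Ici]; linarith) (by linarith)

theorem tendsto_pow_div_Gamma_nat_mul_add_one {μ : ℝ} (hμ : 0 < μ) (c : ℝ) :
    Tendsto (fun k : ℕ => c ^ k / Gamma (k * μ + 1)) atTop (𝓝 0) := by
  set B := max 1 |c|
  set N := ⌈μ⁻¹⌉₊
  have hNμ : 1 ≤ (N : ℝ) * μ := by
    rw [← inv_mul_cancel₀ hμ.ne']
    exact mul_le_mul_of_nonneg_right (Nat.le_ceil _) hμ.le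
  have hN : N ≠ 0 := (Nat.ceil_pos.2 (inv_pos.2 hμ)).ne'
  have hlim : Tendsto (fun k : ℕ => B ^ N * ((B ^ N) ^ (k / N) / (k / N)!)) atTop (𝓝 0) := by
    simpa using ((FloorSemiring.tendsto_pow_div_factorial_atTop (B ^ N)).comp
      (Nat.tendsto_div_const_atTop hN)).const_mul (B ^ N)
  refine squeeze_zero_norm' ?_ hlim
  filter_upwards [eventually_ge_atTop N] with k hk
  set j := k / N
  have hj : 1 ≤ j := Nat.div_pos hk (Nat.pos_of_ne_zero hN)
  have hjk : (j : ℝ) ≤ k * μ := calc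
    (j : ℝ) ≤ j * (N * μ) := le_mul_of_one_le_right (by positivity) hNμ
    _ = ((j * N : ℕ) : ℝ) * μ := by push_cast; ring
    _ ≤ k * μ := by gcongr; exact Nat.div_mul_le_self k N
  have hpow : |c| ^ k ≤ B ^ N * (B ^ N) ^ j := calc
    |c| ^ k ≤ B ^ k := pow_le_pow_left₀ (abs_nonneg c) (le_max_right _ _) k
    _ ≤ B ^ (N * (j + 1)) := pow_le_pow_right₀ (le_max_left _ _) (Nat.lt_mul_div_succ k
      (Nat.pos_of_ne_zero hN)).le
    _ = B ^ N * (B ^ N) ^ j := by ring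
  rw [norm_div, norm_pow, Real.norm_eq_abs, Real.norm_of_nonneg (Gamma_pos_of_pos
    (by positivity)).le, mul_div_assoc']
  exact div_le_div₀ (by positivity) hpow (by positivity) (factorial_le_Gamma_add_one hj hjk)

theorem summable_pow_div_Gamma_nat_mul_add_one {μ : ℝ} (hμ : 0 < μ) (z : ℝ) :
    Summable fun k : ℕ => z ^ k / Gamma (k * μ + 1) := by
  refine .of_norm_bounded_eventually_nat summable_geometric_two ?_
  filter_upwards [(tendsto_order.1 (tendsto_pow_div_Gamma_nat_mul_add_one hμ (2 * z)).norm).2 1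
    (by norm_num)] with k hk
  have hsplit : z ^ k / Gamma (k * μ + 1) = (1 / 2) ^ k * ((2 * z) ^ k / Gamma (k * μ + 1)) := by
    rw [mul_pow, mul_div_assoc, ← mul_assoc, ← mul_pow]
    norm_num
  rw [hsplit, norm_mul, norm_pow, Real.norm_of_nonneg (by norm_num : (0 : ℝ) ≤ 1 / 2)]
  exact mul_le_of_le_one_right (by positivity) (by simpa using hk.le)

theorem Polynomial.eq_C_three_pow_mul_X_sq_add_C_of_rec {R : Type*} [CommRing R]
    (a : ℕ → R[X]) (ha0 : a 0 = X ^ 2)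
    (harec : ∀ k, a (k + 1) = derivative (derivative (a k)) + derivative (X * a k)) (k : ℕ) :
    a k = C (3 ^ k) * X ^ 2 + C (3 ^ k - 1) := by
  induction k with
  | zero => simp [ha0]
  | succ k ih =>
    rw [harec k, ih]
    simp only [derivative_add, derivative_mul, derivative_C, derivative_X, derivative_sq,
      derivative_zero, derivative_one]
    simp only [map_pow, map_sub, map_one, map_ofNat C]
    ring

theorem vim_solution_p_two_mittag_leffler_general (a : ℕ → Polynomial ℝ)
    (ha0 : a 0 = Polynomial.X ^ 2)
    (harec : ∀ k, a (k + 1) =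
      Polynomial.derivative (Polynomial.derivative (a k)) +
        Polynomial.derivative (Polynomial.X * a k))
    (α κ x t : ℝ) (hα1 : α < 1) (ht : 0 ≤ t) :
    ∑' k : ℕ, (a k).eval x * κ ^ k * t ^ ((k : ℝ) * (1 - α)) /
        Real.Gamma ((k : ℝ) * (1 - α) + 1) =
      x ^ 2 * (∑' k : ℕ, (3 * κ * t ^ (1 - α)) ^ k / Real.Gamma ((k : ℝ) * (1 - α) + 1)) +
        (∑' k : ℕ, (3 * κ * t ^ (1 - α)) ^ k / Real.Gamma ((k : ℝ) * (1 - α) + 1)) -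
        (∑' k : ℕ, (κ * t ^ (1 - α)) ^ k / Real.Gamma ((k : ℝ) * (1 - α) + 1)) := by
  have hμ : 0 < 1 - α := sub_pos.2 hα1
  have hterm : ∀ k : ℕ,
      (a k).eval x * κ ^ k * t ^ ((k : ℝ) * (1 - α)) / Gamma ((k : ℝ) * (1 - α) + 1) =
        (x ^ 2 + 1) * ((3 * κ * t ^ (1 - α)) ^ k / Gamma ((k : ℝ) * (1 - α) + 1)) -
          (κ * t ^ (1 - α)) ^ k / Gamma ((k : ℝ) * (1 - α) + 1) := by
    intro k
    rw [eq_C_three_pow_mul_X_sq_add_C_of_rec a ha0 harec k, mul_comm (k : ℝ),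
      rpow_mul ht, rpow_natCast]
    simp only [eval_add, eval_mul, eval_C, eval_pow, eval_X]
    ring
  rw [tsum_congr hterm, ((summable_pow_div_Gamma_nat_mul_add_one hμ _).mul_left _).tsum_sub
    (summable_pow_div_Gamma_nat_mul_add_one hμ _), tsum_mul_left]
  ring

/-- Closed form of the series solution for initial condition `c(x,0) = x²`: with
`a_0(x) = x²`, `a_{k+1} = a_k'' + (x·a_k)'`, `0 < α < 1`, `t ≥ 0`,
`∑_k a_k(x) κ^k t^{k(1−α)} / Γ(k(1−α)+1)
  = x² E_{1−α}(3κ t^{1−α}) + E_{1−α}(3κ t^{1−α}) − E_{1−α}(κ t^{1−α})`,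
where `E_{1−α}(z) = ∑_k z^k / Γ(k(1−α)+1)`. -/
theorem vim_solution_p_two_mittag_leffler (a : ℕ → Polynomial ℝ)
    (ha0 : a 0 = Polynomial.X ^ 2)
    (harec : ∀ k, a (k + 1) =
      Polynomial.derivative (Polynomial.derivative (a k)) +
        Polynomial.derivative (Polynomial.X * a k))
    (α κ x t : ℝ) (hα0 : 0 < α) (hα1 : α < 1) (ht : 0 ≤ t) :
    ∑' k : ℕ, (a k).eval x * κ ^ k * t ^ ((k : ℝ) * (1 - α)) /
        Real.Gamma ((k : ℝ) * (1 - α) + 1) =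
      x ^ 2 * (∑' k : ℕ, (3 * κ * t ^ (1 - α)) ^ k / Real.Gamma ((k : ℝ) * (1 - α) + 1)) +
        (∑' k : ℕ, (3 * κ * t ^ (1 - α)) ^ k / Real.Gamma ((k : ℝ) * (1 - α) + 1)) -
        (∑' k : ℕ, (κ * t ^ (1 - α)) ^ k / Real.Gamma ((k : ℝ) * (1 - α) + 1)) :=
  vim_solution_p_two_mittag_leffler_general a ha0 harec α κ x t hα1 ht
end

section
/- Let z be a real number with |z| < 1. Then the Mittag-Leffler value E_{1−α}(z) = ∑_{k=0}^∞ z^k / Γ(k(1−α)+1) tends to the geometric series sum 1/(1−z) as α → 1 from the left: lim_{α→1⁻} ∑_{k=0}^∞ z^k / Γ(k(1−α)+1) = 1/(1−z). -/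
open Real Filter MeasureTheory Set

lemma gamma_lower (s : ℝ) (hs : 1 ≤ s) : Real.exp (-1) ≤ Real.Gamma s := by
  have hs0 : (0:ℝ) < s := lt_of_lt_of_le one_pos hs
  rw [Real.Gamma_eq_integral hs0]
  have h1 : Real.exp (-1) = ∫ x in Ioi (1:ℝ), Real.exp (-x) := (integral_exp_neg_Ioi 1).symm
  rw [h1]
  have hint : IntegrableOn (fun x => Real.exp (-x) * x ^ (s-1)) (Ioi (0:ℝ)) :=
    Real.GammaIntegral_convergent hs0
  have hsub : Ioi (1:ℝ) ⊆ Ioi 0 := Ioi_subset_Ioi one_pos.le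
  have step1 : (∫ x in Ioi (1:ℝ), Real.exp (-x)) ≤ ∫ x in Ioi (1:ℝ), Real.exp (-x) * x ^ (s-1) := by
    apply setIntegral_mono_on
    · simpa using exp_neg_integrableOn_Ioi 1 (one_pos (α := ℝ))
    · exact hint.mono_set hsub
    · exact measurableSet_Ioi
    · intro x hx
      have hx1 : (1:ℝ) ≤ x := le_of_lt hx
      nlinarith [Real.one_le_rpow hx1 (by linarith : (0:ℝ) ≤ s - 1), Real.exp_pos (-x)]
  refine step1.trans ?_
  apply setIntegral_mono_set hint ?_ (HasSubset.Subset.eventuallyLE hsub)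
  filter_upwards [self_mem_ae_restrict (measurableSet_Ioi : MeasurableSet (Ioi (0:ℝ)))] with x hx
  exact mul_nonneg (Real.exp_pos _).le (Real.rpow_nonneg (le_of_lt hx) _)

/-- As `α → 1⁻`, the Mittag-Leffler value `E_{1−α}(z) = ∑_k z^k / Γ(k(1−α)+1)`
tends to the geometric series sum `1/(1−z)`, for `|z| < 1`. -/
theorem mittag_leffler_tendsto_geometric (z : ℝ) (hz : |z| < 1) :
    Filter.Tendsto
      (fun α : ℝ => ∑' k : ℕ, z ^ k / Real.Gamma ((k : ℝ) * (1 - α) + 1))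
      (nhdsWithin 1 (Set.Iio 1)) (nhds (1 / (1 - z))) := by
  have hgeo : ∑' k : ℕ, z ^ k = 1 / (1 - z) := by
    rw [tsum_geometric_of_abs_lt_one hz, one_div]
  rw [← hgeo]
  apply tendsto_tsum_of_dominated_convergence
    (bound := fun k : ℕ => |z| ^ k * Real.exp 1)
  · exact (summable_geometric_of_lt_one (abs_nonneg z) hz).mul_right _
  · intro k
    have hcont : Filter.Tendsto (fun α : ℝ => Real.Gamma ((k : ℝ) * (1 - α) + 1))
        (nhdsWithin 1 (Set.Iio 1)) (nhds 1) := by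
      have h1 : Filter.Tendsto (fun α : ℝ => (k : ℝ) * (1 - α) + 1) (nhds 1) (nhds 1) := by
        have : Filter.Tendsto (fun α : ℝ => (k : ℝ) * (1 - α) + 1) (nhds 1)
            (nhds ((k : ℝ) * (1 - 1) + 1)) := by
          exact ((continuous_const.mul (continuous_const.sub continuous_id)).add continuous_const).tendsto 1
        simpa using this
      have hG : ContinuousAt Real.Gamma 1 := by
        apply (Real.differentiableAt_Gamma ?_).continuousAt
        intro m
        have : (0:ℝ) < 1 := one_pos
        have hm : -(m:ℝ) ≤ 0 := neg_nonpos.mpr (Nat.cast_nonneg m)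
        intro h; rw [← h] at hm; linarith
      have := hG.tendsto.comp h1
      rw [Real.Gamma_one] at this
      exact this.mono_left nhdsWithin_le_nhds
    have : Filter.Tendsto (fun α : ℝ => z ^ k / Real.Gamma ((k : ℝ) * (1 - α) + 1))
        (nhdsWithin 1 (Set.Iio 1)) (nhds (z ^ k / 1)) :=
      Filter.Tendsto.div tendsto_const_nhds hcont one_ne_zero
    simpa using this
  · filter_upwards [self_mem_nhdsWithin] with α (hα : α < 1)
    intro k
    have h1 : (1:ℝ) ≤ (k : ℝ) * (1 - α) + 1 := by
      have : (0:ℝ) ≤ (k : ℝ) * (1 - α) :=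
        mul_nonneg (Nat.cast_nonneg k) (by linarith)
      linarith
    have hG := gamma_lower _ h1
    have hGpos : (0:ℝ) < Real.Gamma ((k : ℝ) * (1 - α) + 1) :=
      lt_of_lt_of_le (Real.exp_pos _) hG
    rw [norm_div, Real.norm_eq_abs, Real.norm_eq_abs, abs_pow,
      _root_.abs_of_nonneg hGpos.le]
    calc |z| ^ k / Real.Gamma ((k : ℝ) * (1 - α) + 1)
        ≤ |z| ^ k / Real.exp (-1) := by
          gcongr
      _ = |z| ^ k * Real.exp 1 := by
          rw [Real.exp_neg, div_inv_eq_mul]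
end
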